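/- Let n ≥ 4 and b₄,…,bₙ ∈ ℂ. On U = {x ∈ ℝⁿ : x₁² + x₂² + x₃² > 0}, the function φ(x) = √(x₁² + x₂² + x₃²) + Σ_{k=4}^n bₖ·xₖ satisfies κ(φ,φ) = 0 if and only if 1 + b₄² + ⋯ + bₙ² = 0; and under this condition φ satisfies τ²(φ) = 0 and τ²(φ²) = 0 while τ(φ) ≠ 0 (so φ is a proper (2,1)-harmonic morphism). -/

import Mathlib

/-!
Write `q = x₁² + x₂² + x₃²`, `r = √q`, and `φ = r + L` with `L` real-linear and `∂ᵢL = 0` for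
`i ≤ 3`. Since `∇r = x/r` is a unit vector orthogonal to `∇L`, `κ(φ,φ) = 1 + Σ bₖ²`.
Everything radial is a power of `q`, and `τ(q^p) = 2p(m + 2p - 2) q^(p-1)` in `m` variables;
for `m = 3` this gives `τφ = τr = 2/r` and `τ(1/r) = 0`, hence `τ²φ = 0`. By the Leibniz rule
`τ(fg) = f τg + 2κ(f,g) + g τf`, if `κ(φ,φ) = 0` then `τ(φ²) = 2φτφ = 4φ/r`, and
`τ²(φ²) = 4(φ τ(1/r) + 2κ(φ,1/r) + τφ / r) = 4(0 - 2/r² + 2/r²) = 0`.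
-/

open scoped BigOperators ContDiff
open Complex

noncomputable section

variable {G : Type*} [NormedAddCommGroup G] [NormedSpace ℝ G]

/-- Partial derivative in the `i`-th coordinate direction on Euclidean space. -/
def pd {n : ℕ} (i : Fin n) (f : EuclideanSpace ℝ (Fin n) → G) :
    EuclideanSpace ℝ (Fin n) → G :=
  fun x => fderiv ℝ f x (EuclideanSpace.single i 1)

/-- The Euclidean Laplace–Beltrami operator (extended linearly to vector-valued maps). -/
def lap {n : ℕ} (f : EuclideanSpace ℝ (Fin n) → G) :
    EuclideanSpace ℝ (Fin n) → G :=
  fun x => ∑ i, pd i (pd i f) x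

/-- The conformality operator `κ(z,w) = g(∇z, ∇w)` (complex-bilinear extension). -/
def kap {n : ℕ} (f g : EuclideanSpace ℝ (Fin n) → ℂ) :
    EuclideanSpace ℝ (Fin n) → ℂ :=
  fun x => ∑ i, pd i f x * pd i g x

open Topology

section PartialDerivatives

variable {n : ℕ} {x : EuclideanSpace ℝ (Fin n)}

theorem pd_eq_of_hasFDerivAt {f : EuclideanSpace ℝ (Fin n) → G}
    {f' : EuclideanSpace ℝ (Fin n) →L[ℝ] G} (h : HasFDerivAt f f' x) (i : Fin n) :
    pd i f x = f' (EuclideanSpace.single i 1) := by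
  rw [pd, h.fderiv]

theorem Filter.EventuallyEq.pd_eq {f g : EuclideanSpace ℝ (Fin n) → G} (h : f =ᶠ[𝓝 x] g)
    (i : Fin n) : pd i f x = pd i g x := by
  simp only [pd, h.fderiv_eq]

theorem Filter.EventuallyEq.pd {f g : EuclideanSpace ℝ (Fin n) → G} (h : f =ᶠ[𝓝 x] g)
    (i : Fin n) : pd i f =ᶠ[𝓝 x] pd i g :=
  h.eventuallyEq_nhds.mono fun _ hy => hy.pd_eq i

theorem Filter.EventuallyEq.lap_eq {f g : EuclideanSpace ℝ (Fin n) → G} (h : f =ᶠ[𝓝 x] g) :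
    lap f x = lap g x :=
  Finset.sum_congr rfl fun i _ => (h.pd i).pd_eq i

theorem pd_const (i : Fin n) (c : G) : pd i (fun _ : EuclideanSpace ℝ (Fin n) => c) = 0 := by
  ext; simp [pd]

theorem pd_add_const (i : Fin n) (f : EuclideanSpace ℝ (Fin n) → G) (c : G) :
    pd i (fun y => f y + c) = pd i f := by
  ext; simp [pd, fderiv_add_const]

theorem pd_coord (i j : Fin n) :
    pd j (fun y : EuclideanSpace ℝ (Fin n) => y i) x = if i = j then 1 else 0 := by
  simpa [PiLp.single_apply] using
    pd_eq_of_hasFDerivAt ((EuclideanSpace.proj i : _ →L[ℝ] ℝ).hasFDerivAt (x := x)) j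

theorem pd_clm (L : EuclideanSpace ℝ (Fin n) →L[ℝ] G) (i : Fin n) :
    pd i L x = L (EuclideanSpace.single i 1) :=
  pd_eq_of_hasFDerivAt L.hasFDerivAt i

theorem pd_add {f g : EuclideanSpace ℝ (Fin n) → G} (hf : DifferentiableAt ℝ f x)
    (hg : DifferentiableAt ℝ g x) (i : Fin n) :
    pd i (fun y => f y + g y) x = pd i f x + pd i g x := by
  simp [pd, fderiv_fun_add hf hg]

section Algebra

variable {𝔸 : Type*} [NormedCommRing 𝔸] [NormedAlgebra ℝ 𝔸]

theorem pd_mul {f g : EuclideanSpace ℝ (Fin n) → 𝔸} (hf : DifferentiableAt ℝ f x)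
    (hg : DifferentiableAt ℝ g x) (i : Fin n) :
    pd i (fun y => f y * g y) x = pd i f x * g x + f x * pd i g x := by
  simp only [pd, fderiv_fun_mul hf hg, add_apply, smul_apply, smul_eq_mul]
  ring

end Algebra

theorem pd_const_mul {𝕜 : Type*} [NontriviallyNormedField 𝕜] [NormedAlgebra ℝ 𝕜] (i : Fin n)
    (c : 𝕜) (f : EuclideanSpace ℝ (Fin n) → 𝕜) :
    pd i (fun y => c * f y) = fun y => c * pd i f y := by
  ext y
  simp only [pd]
  rw [show (fun y => c * f y) = c • f from rfl, fderiv_const_smul_field]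
  rfl

theorem lap_const_mul {𝕜 : Type*} [NontriviallyNormedField 𝕜] [NormedAlgebra ℝ 𝕜]
    (c : 𝕜) (f : EuclideanSpace ℝ (Fin n) → 𝕜) :
    lap (fun y => c * f y) x = c * lap f x := by
  simp only [lap, pd_const_mul, Finset.mul_sum]

theorem pd_ofReal (i : Fin n) (f : EuclideanSpace ℝ (Fin n) → ℝ) :
    pd i (fun y => (f y : ℂ)) = fun y => ((pd i f y : ℝ) : ℂ) := by
  ext y
  by_cases hf : DifferentiableAt ℝ f y
  · exact pd_eq_of_hasFDerivAt (ofRealCLM.hasFDerivAt.comp y hf.hasFDerivAt) i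
  · have hf' : ¬DifferentiableAt ℝ (fun y => (f y : ℂ)) y := fun h =>
      hf (by simpa [Function.comp_def] using reCLM.differentiableAt.comp y h)
    simp [pd, fderiv_zero_of_not_differentiableAt hf, fderiv_zero_of_not_differentiableAt hf']

theorem lap_ofReal (f : EuclideanSpace ℝ (Fin n) → ℝ) :
    lap (fun y => (f y : ℂ)) x = ((lap f x : ℝ) : ℂ) := by
  simp [lap, pd_ofReal]

theorem ContDiffAt.differentiableAt_pd {f : EuclideanSpace ℝ (Fin n) → G}
    (hf : ContDiffAt ℝ 2 f x) (i : Fin n) : DifferentiableAt ℝ (pd i f) x :=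
  ((hf.fderiv_right (m := 1) le_rfl).differentiableAt one_ne_zero).clm_apply
    (differentiableAt_const _)

theorem lap_mul {f g : EuclideanSpace ℝ (Fin n) → ℂ} (hf : ContDiffAt ℝ 2 f x)
    (hg : ContDiffAt ℝ 2 g x) :
    lap (fun y => f y * g y) x = f x * lap g x + 2 * kap f g x + g x * lap f x := by
  have hpd (i : Fin n) :
      pd i (fun y => f y * g y) =ᶠ[𝓝 x] fun y => pd i f y * g y + f y * pd i g y := by
    filter_upwards [hf.eventually (by simp), hg.eventually (by simp)] with y hfy hgy
    exact pd_mul (hfy.differentiableAt two_ne_zero) (hgy.differentiableAt two_ne_zero) i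
  have hf₁ := hf.differentiableAt two_ne_zero
  have hg₁ := hg.differentiableAt two_ne_zero
  simp only [lap, kap, Finset.mul_sum, ← Finset.sum_add_distrib]
  refine Finset.sum_congr rfl fun i _ => ?_
  rw [(hpd i).pd_eq, pd_add ((hf.differentiableAt_pd i).fun_mul hg₁)
    (hf₁.fun_mul (hg.differentiableAt_pd i)), pd_mul (hf.differentiableAt_pd i) hg₁,
    pd_mul hf₁ (hg.differentiableAt_pd i)]
  ring

end PartialDerivatives

section PartialSqNorm

variable {n : ℕ} (s : Finset (Fin n)) {x : EuclideanSpace ℝ (Fin n)}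

def partialSqNorm (y : EuclideanSpace ℝ (Fin n)) : ℝ := ∑ i ∈ s, y i ^ 2

theorem contDiff_partialSqNorm {k : WithTop ℕ∞} : ContDiff ℝ k (partialSqNorm s) := by
  unfold partialSqNorm
  fun_prop

theorem isOpen_partialSqNorm_pos : IsOpen {y : EuclideanSpace ℝ (Fin n) | 0 < partialSqNorm s y} :=
  isOpen_lt continuous_const (contDiff_partialSqNorm s (k := 0)).continuous

theorem pd_partialSqNorm (j : Fin n) :
    pd j (partialSqNorm s) x = if j ∈ s then 2 * x j else 0 := by
  have hcoord (i : Fin n) : HasFDerivAt (fun y : EuclideanSpace ℝ (Fin n) => y i)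
      (EuclideanSpace.proj i : _ →L[ℝ] ℝ) x := (EuclideanSpace.proj (𝕜 := ℝ) i).hasFDerivAt
  unfold partialSqNorm
  rw [pd_eq_of_hasFDerivAt (HasFDerivAt.fun_sum fun i _ => (hcoord i).pow 2) j]
  simp [PiLp.single_apply, Finset.sum_ite_eq', mul_comm]

variable {s}

theorem pd_rpow_partialSqNorm (hx : 0 < partialSqNorm s x) (p : ℝ) (j : Fin n) :
    pd j (fun y => partialSqNorm s y ^ p) x
      = if j ∈ s then 2 * p * partialSqNorm s x ^ (p - 1) * x j else 0 := by
  have hq := (contDiff_partialSqNorm s (k := 1)).differentiable one_ne_zero x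
  rw [pd_eq_of_hasFDerivAt (hq.hasFDerivAt.rpow_const (Or.inl hx.ne')) j]
  simp only [smul_apply, smul_eq_mul]
  rw [← pd, pd_partialSqNorm]
  split_ifs <;> ring

theorem pd_pd_rpow_partialSqNorm (hx : 0 < partialSqNorm s x) (p : ℝ) (j : Fin n) :
    pd j (pd j (fun y => partialSqNorm s y ^ p)) x
      = if j ∈ s then 2 * p * (2 * (p - 1) * partialSqNorm s x ^ (p - 2) * x j ^ 2
          + partialSqNorm s x ^ (p - 1)) else 0 := by
  have hpd : pd j (fun y => partialSqNorm s y ^ p) =ᶠ[𝓝 x]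
      fun y => if j ∈ s then 2 * p * (partialSqNorm s y ^ (p - 1) * y j) else 0 := by
    filter_upwards [(isOpen_partialSqNorm_pos s).mem_nhds hx] with y hy
    rw [pd_rpow_partialSqNorm hy]
    split_ifs <;> ring
  rw [hpd.pd_eq]
  split_ifs with hj
  · have hdiff : DifferentiableAt ℝ (fun y => partialSqNorm s y ^ (p - 1)) x :=
      (((contDiff_partialSqNorm s (k := 1)).contDiffAt.rpow_const_of_ne hx.ne').differentiableAt
        one_ne_zero)
    have hcoord : DifferentiableAt ℝ (fun y : EuclideanSpace ℝ (Fin n) => y j) x :=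
      (EuclideanSpace.proj (𝕜 := ℝ) j).differentiableAt
    simp only [pd_const_mul]
    rw [pd_mul hdiff hcoord, pd_rpow_partialSqNorm hx, if_pos hj, pd_coord, if_pos rfl,
      show p - 1 - 1 = p - 2 by ring]
    ring
  · rw [pd_const, Pi.zero_apply]

theorem lap_rpow_partialSqNorm (hx : 0 < partialSqNorm s x) (p : ℝ) :
    lap (fun y => partialSqNorm s y ^ p) x
      = 2 * p * (s.card + 2 * p - 2) * partialSqNorm s x ^ (p - 1) := by
  have hpow : partialSqNorm s x ^ (p - 2) * partialSqNorm s x = partialSqNorm s x ^ (p - 1) := by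
    rw [← Real.rpow_add_one hx.ne']; ring_nf
  simp only [lap, pd_pd_rpow_partialSqNorm hx, Finset.sum_ite_mem, Finset.univ_inter,
    Finset.sum_add_distrib, ← Finset.mul_sum, Finset.sum_const, nsmul_eq_mul]
  rw [← partialSqNorm, ← hpow]
  ring

theorem sum_pd_mul_pd_rpow_partialSqNorm (hx : 0 < partialSqNorm s x) (p p' : ℝ) :
    ∑ j, pd j (fun y => partialSqNorm s y ^ p) x * pd j (fun y => partialSqNorm s y ^ p') x
      = 4 * p * p' * partialSqNorm s x ^ (p + p' - 1) := by
  have hpow : partialSqNorm s x ^ (p - 1) * partialSqNorm s x ^ (p' - 1) * ∑ j ∈ s, x j ^ 2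
      = partialSqNorm s x ^ (p + p' - 1) := by
    rw [← Real.rpow_add hx, ← partialSqNorm, ← Real.rpow_add_one hx.ne']; ring_nf
  simp only [pd_rpow_partialSqNorm hx, mul_ite, ite_mul, mul_zero, zero_mul,
    Finset.sum_ite_mem, Finset.univ_inter, Finset.inter_self]
  rw [← hpow, Finset.mul_sum, Finset.mul_sum]
  exact Finset.sum_congr rfl fun j _ => by ring

theorem partialSqNorm_single {i : Fin n} (hi : i ∈ s) :
    partialSqNorm s (EuclideanSpace.single i 1) = 1 := by
  simp [partialSqNorm, PiLp.single_apply, hi]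

end PartialSqNorm

section WeightedCoordSum

variable {n : ℕ} (K : Finset (Fin n)) (b : Fin n → ℂ)

def weightedCoordSum : EuclideanSpace ℝ (Fin n) →L[ℝ] ℂ :=
  ∑ k ∈ K, b k • ofRealCLM.comp (EuclideanSpace.proj k)

theorem weightedCoordSum_apply (y : EuclideanSpace ℝ (Fin n)) :
    weightedCoordSum K b y = ∑ k ∈ K, b k * (y k : ℂ) := by
  simp [weightedCoordSum]

theorem weightedCoordSum_single (i : Fin n) :
    weightedCoordSum K b (EuclideanSpace.single i 1) = if i ∈ K then b i else 0 := by
  simp [weightedCoordSum, PiLp.single_apply, apply_ite ((↑) : ℝ → ℂ)]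

theorem sum_weightedCoordSum_single_sq :
    ∑ i, weightedCoordSum K b (EuclideanSpace.single i 1) ^ 2 = ∑ k ∈ K, b k ^ 2 := by
  simp [weightedCoordSum_single, ite_pow, Finset.sum_ite_mem]

end WeightedCoordSum

section NormAddLinear

variable {n : ℕ} {s : Finset (Fin n)} {L : EuclideanSpace ℝ (Fin n) →L[ℝ] ℂ}
  {x : EuclideanSpace ℝ (Fin n)}

/-- The square root is written as the real power `q ^ (1/2)`, so that every radial function below
is a power of `q = partialSqNorm s`. -/
def normAddLinear (s : Finset (Fin n)) (L : EuclideanSpace ℝ (Fin n) →L[ℝ] ℂ) :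
    EuclideanSpace ℝ (Fin n) → ℂ :=
  fun y => ((partialSqNorm s y ^ (1 / 2 : ℝ) : ℝ) : ℂ) + L y

theorem contDiffAt_ofReal_rpow_partialSqNorm (hx : 0 < partialSqNorm s x) (p : ℝ) :
    ContDiffAt ℝ 2 (fun y => ((partialSqNorm s y ^ p : ℝ) : ℂ)) x :=
  ofRealCLM.contDiff.contDiffAt.comp x
    ((contDiff_partialSqNorm s).contDiffAt.rpow_const_of_ne hx.ne')

theorem contDiffAt_normAddLinear (hx : 0 < partialSqNorm s x) :
    ContDiffAt ℝ 2 (normAddLinear s L) x :=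
  (contDiffAt_ofReal_rpow_partialSqNorm hx _).add L.contDiff.contDiffAt

theorem pd_normAddLinear (hx : 0 < partialSqNorm s x) (i : Fin n) :
    pd i (normAddLinear s L) x
      = ((pd i (fun y => partialSqNorm s y ^ (1 / 2 : ℝ)) x : ℝ) : ℂ)
        + L (EuclideanSpace.single i 1) := by
  unfold normAddLinear
  rw [pd_add ((contDiffAt_ofReal_rpow_partialSqNorm hx _).differentiableAt
    two_ne_zero) L.differentiableAt, pd_ofReal, pd_clm]

theorem clm_single_mul_pd_rpow_partialSqNorm_eq_zero
    (hL : ∀ i ∈ s, L (EuclideanSpace.single i 1) = 0) (hx : 0 < partialSqNorm s x) (p : ℝ) (i : Fin n) :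
    L (EuclideanSpace.single i 1) * ((pd i (fun y => partialSqNorm s y ^ p) x : ℝ) : ℂ) = 0 := by
  rw [pd_rpow_partialSqNorm hx]
  split_ifs with hi
  · rw [hL i hi, zero_mul]
  · rw [Complex.ofReal_zero, mul_zero]

theorem kap_normAddLinear_ofReal_rpow (hL : ∀ i ∈ s, L (EuclideanSpace.single i 1) = 0)
    (hx : 0 < partialSqNorm s x) (p : ℝ) :
    kap (normAddLinear s L) (fun y => ((partialSqNorm s y ^ p : ℝ) : ℂ)) x
      = ((2 * p * partialSqNorm s x ^ (p - 1 / 2) : ℝ) : ℂ) := by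
  simp only [kap, pd_normAddLinear hx, pd_ofReal, add_mul,
    clm_single_mul_pd_rpow_partialSqNorm_eq_zero hL hx, add_zero]
  exact_mod_cast (sum_pd_mul_pd_rpow_partialSqNorm hx (1 / 2) p).trans (by ring_nf)

theorem kap_normAddLinear (hL : ∀ i ∈ s, L (EuclideanSpace.single i 1) = 0)
    (hx : 0 < partialSqNorm s x) :
    kap (normAddLinear s L) (normAddLinear s L) x
      = 1 + ∑ i, L (EuclideanSpace.single i 1) ^ 2 := by
  have hcross := clm_single_mul_pd_rpow_partialSqNorm_eq_zero hL hx (1 / 2)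
  have hsq : ∑ i, ((pd i (fun y => partialSqNorm s y ^ (1 / 2 : ℝ)) x : ℝ) : ℂ) ^ 2 = 1 := by
    simp only [sq]
    exact_mod_cast (sum_pd_mul_pd_rpow_partialSqNorm hx (1 / 2) (1 / 2)).trans (by norm_num)
  simp only [kap, pd_normAddLinear hx]
  rw [← hsq, ← Finset.sum_add_distrib]
  refine Finset.sum_congr rfl fun i _ => ?_
  linear_combination 2 * hcross i

theorem lap_normAddLinear (hx : 0 < partialSqNorm s x) :
    lap (normAddLinear s L) x = (((s.card - 1) * partialSqNorm s x ^ (-(1 / 2) : ℝ) : ℝ) : ℂ) := by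
  have hpd (i : Fin n) : pd i (normAddLinear s L) =ᶠ[𝓝 x]
      fun y => ((pd i (fun y => partialSqNorm s y ^ (1 / 2 : ℝ)) y : ℝ) : ℂ)
        + L (EuclideanSpace.single i 1) := by
    filter_upwards [(isOpen_partialSqNorm_pos s).mem_nhds hx] with y hy
    exact pd_normAddLinear hy i
  have hlap : lap (normAddLinear s L) x
      = ((lap (fun y => partialSqNorm s y ^ (1 / 2 : ℝ)) x : ℝ) : ℂ) := by
    simp only [lap, (hpd _).pd_eq, pd_add_const, pd_ofReal, Complex.ofReal_sum]
  rw [hlap, lap_rpow_partialSqNorm hx]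
  congr 1
  ring_nf

theorem lap_normAddLinear_eventuallyEq (hs : s.card = 3) (hx : 0 < partialSqNorm s x) :
    lap (normAddLinear s L) =ᶠ[𝓝 x]
      fun y => 2 * ((partialSqNorm s y ^ (-(1 / 2) : ℝ) : ℝ) : ℂ) := by
  filter_upwards [(isOpen_partialSqNorm_pos s).mem_nhds hx] with y hy
  rw [lap_normAddLinear hy, hs]
  push_cast
  ring

theorem lap_ofReal_rpow_partialSqNorm_neg_half (hs : s.card = 3) (hx : 0 < partialSqNorm s x) :
    lap (fun y => ((partialSqNorm s y ^ (-(1 / 2) : ℝ) : ℝ) : ℂ)) x = 0 := by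
  rw [lap_ofReal, lap_rpow_partialSqNorm hx, hs]
  norm_num

theorem lap_lap_normAddLinear (hs : s.card = 3) (hx : 0 < partialSqNorm s x) :
    lap (lap (normAddLinear s L)) x = 0 := by
  rw [(lap_normAddLinear_eventuallyEq hs hx).lap_eq, lap_const_mul,
    lap_ofReal_rpow_partialSqNorm_neg_half hs hx, mul_zero]

theorem lap_lap_sq_normAddLinear (hs : s.card = 3) (hL : ∀ i ∈ s, L (EuclideanSpace.single i 1) = 0)
    (hconf : ∀ y, 0 < partialSqNorm s y → kap (normAddLinear s L) (normAddLinear s L) y = 0)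
    (hx : 0 < partialSqNorm s x) :
    lap (lap fun y => normAddLinear s L y ^ 2) x = 0 := by
  have hlap_sq : lap (fun y => normAddLinear s L y ^ 2) =ᶠ[𝓝 x] fun y =>
      4 * (normAddLinear s L y * ((partialSqNorm s y ^ (-(1 / 2) : ℝ) : ℝ) : ℂ)) := by
    filter_upwards [(isOpen_partialSqNorm_pos s).mem_nhds hx] with y hy
    simp only [sq]
    rw [lap_mul (contDiffAt_normAddLinear hy) (contDiffAt_normAddLinear hy), hconf y hy,
      (lap_normAddLinear_eventuallyEq hs hy).eq_of_nhds]
    ring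
  have hρ_sq : ((partialSqNorm s x ^ (-(1 / 2) : ℝ) : ℝ) : ℂ) ^ 2
      = ((partialSqNorm s x ^ (-1 : ℝ) : ℝ) : ℂ) := by
    rw [← Complex.ofReal_pow, ← Real.rpow_natCast, ← Real.rpow_mul hx.le]
    norm_num
  rw [hlap_sq.lap_eq, lap_const_mul,
    lap_mul (contDiffAt_normAddLinear hx) (contDiffAt_ofReal_rpow_partialSqNorm hx _),
    lap_ofReal_rpow_partialSqNorm_neg_half hs hx, kap_normAddLinear_ofReal_rpow hL hx,
    (lap_normAddLinear_eventuallyEq hs hx).eq_of_nhds, show (-(1 / 2) - 1 / 2 : ℝ) = -1 by norm_num]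
  push_cast
  linear_combination 8 * hρ_sq

theorem kap_normAddLinear_eq_zero_iff (hL : ∀ i ∈ s, L (EuclideanSpace.single i 1) = 0)
    (hs : s.Nonempty) :
    (∀ x ∈ {x | 0 < partialSqNorm s x}, kap (normAddLinear s L) (normAddLinear s L) x = 0) ↔
      1 + ∑ i, L (EuclideanSpace.single i 1) ^ 2 = 0 := by
  obtain ⟨i, hi⟩ := hs
  have hpos : 0 < partialSqNorm s (EuclideanSpace.single i 1) := by
    rw [partialSqNorm_single hi]; exact one_pos
  exact ⟨fun h => (kap_normAddLinear hL hpos).symm.trans (h _ hpos),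
    fun h x hx => (kap_normAddLinear hL hx).trans h⟩

theorem exists_lap_normAddLinear_ne_zero (hs : 1 < s.card) :
    ∃ x ∈ {x | 0 < partialSqNorm s x}, lap (normAddLinear s L) x ≠ 0 := by
  obtain ⟨i, hi⟩ : s.Nonempty := Finset.card_pos.1 (by omega)
  have hpos : 0 < partialSqNorm s (EuclideanSpace.single i 1) := by
    rw [partialSqNorm_single hi]; exact one_pos
  refine ⟨_, hpos, ?_⟩
  rw [lap_normAddLinear hpos, partialSqNorm_single hi, Real.one_rpow, mul_one,
    Complex.ofReal_ne_zero, sub_ne_zero]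
  exact_mod_cast hs.ne'

end NormAddLinear

/-- On `U = {x ∈ ℝⁿ : x₁²+x₂²+x₃² > 0}` (`n ≥ 4`), the function
`φ(x) = √(x₁²+x₂²+x₃²) + Σ_{k≥4} bₖ·xₖ` satisfies `κ(φ,φ) = 0` iff
`1 + b₄² + ⋯ + bₙ² = 0`, and under this condition it is a proper
`(2,1)`-harmonic morphism. -/
theorem example_family_proper_21_harmonic_morphism {n : ℕ} (hn : 4 ≤ n)
    (b : Fin n → ℂ)
    (U : Set (EuclideanSpace ℝ (Fin n)))
    (hU : U = {x | (x ⟨0, by omega⟩) ^ 2 + (x ⟨1, by omega⟩) ^ 2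
      + (x ⟨2, by omega⟩) ^ 2 > 0})
    (φ : EuclideanSpace ℝ (Fin n) → ℂ)
    (hφ : φ = fun x =>
      (Real.sqrt ((x ⟨0, by omega⟩) ^ 2 + (x ⟨1, by omega⟩) ^ 2
          + (x ⟨2, by omega⟩) ^ 2) : ℂ)
        + ∑ k ∈ Finset.univ.filter (fun k : Fin n => 3 ≤ (k : ℕ)),
            b k * (x k : ℂ)) :
    ((∀ x ∈ U, kap φ φ x = 0) ↔
        1 + ∑ k ∈ Finset.univ.filter (fun k : Fin n => 3 ≤ (k : ℕ)), (b k) ^ 2 = 0) ∧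
    (1 + ∑ k ∈ Finset.univ.filter (fun k : Fin n => 3 ≤ (k : ℕ)), (b k) ^ 2 = 0 →
      (∀ x ∈ U, lap (lap φ) x = 0 ∧ lap (lap (fun p => φ p ^ 2)) x = 0) ∧
        ∃ x ∈ U, lap φ x ≠ 0) := by
  set K := Finset.univ.filter (fun k : Fin n => 3 ≤ (k : ℕ))
  set s : Finset (Fin n) := {⟨0, by omega⟩, ⟨1, by omega⟩, ⟨2, by omega⟩}
  have hs : s.card = 3 := by simp [s, Fin.ext_iff]
  have hne : s.Nonempty := Finset.card_pos.1 (by omega)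
  have hL : ∀ i ∈ s, weightedCoordSum K b (EuclideanSpace.single i 1) = 0 := by
    intro i hi
    simp only [s, Finset.mem_insert, Finset.mem_singleton, Fin.ext_iff] at hi
    rw [weightedCoordSum_single, if_neg (by simp only [K, Finset.mem_filter]; omega)]
  have hq (x : EuclideanSpace ℝ (Fin n)) :
      partialSqNorm s x = x ⟨0, by omega⟩ ^ 2 + x ⟨1, by omega⟩ ^ 2 + x ⟨2, by omega⟩ ^ 2 := by
    simp [partialSqNorm, s, Fin.ext_iff, add_assoc]
  obtain rfl : U = {x | 0 < partialSqNorm s x} := by simp [hU, hq]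
  obtain rfl : φ = normAddLinear s (weightedCoordSum K b) := by
    funext x
    simp only [hφ, normAddLinear, weightedCoordSum_apply, hq, Real.sqrt_eq_rpow]
  rw [← sum_weightedCoordSum_single_sq, ← kap_normAddLinear_eq_zero_iff hL hne]
  exact ⟨Iff.rfl, fun hconf => ⟨fun x hx => ⟨lap_lap_normAddLinear hs hx,
    lap_lap_sq_normAddLinear hs hL hconf hx⟩, exists_lap_normAddLinear_ne_zero (by omega)⟩⟩
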